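/- For every integer N ≥ 1, the following identity of polynomials in q holds: ∑_{n=1}^{N} ∑_{m=0}^{N−n} (−1)^{N−n−m} q^{E(n,m,N)} [N choose n+m]_q = (−1)^{N+1} q^{binom(N+2,2)} ∏_{j=2}^{N}(1 − q^{j}), where E(n,m,N) = n + (m+n)(n+1) + binom(N−n−m+1, 2) + (N−n−m)·n, and binom(a,2) = a(a−1)/2. -/

import Mathlib

/-!
Reflecting the inner sum (`k = N - n - m`) and using `[N, N - k] = [N, k]` turns it into
`q^(n(N+1)+N) ∑_{k ≤ N-n} (-1)^k q^(binom(k,2)) [N, k]`, and this partial alternating sum telescopes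
by q-Pascal to `(-1)^(N-n) q^(binom(N-n+1,2)) [N-1, N-n]`. With `j = N - n` the outer sum becomes
`q^(3N)` times the homogeneous q-binomial theorem
`∑_j (-1)^j q^(binom(j,2)) z^j w^(M-j) [M, j] = ∏_{t<M} (w - z q^t)` at `M = N - 1`, `z = 1`,
`w = q^N`, and `∏_{t<N-1} (q^N - q^t) = (-1)^(N-1) q^(binom(N-1,2)) ∏_{j=2}^N (1 - q^j)`.
-/

open Polynomial

/-- The q-Pochhammer symbol `(q;q)_n = ∏_{j=0}^{n-1} (1 - q^{j+1})` as a polynomial in `ℤ[q]`. -/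
noncomputable def qPoch (n : ℕ) : Polynomial ℤ :=
  ∏ j ∈ Finset.range n, (1 - X ^ (j + 1))

/-- The Gaussian (q-)binomial coefficient `[A choose B]_q`, viewed in the fraction field
of `ℤ[q]`: it equals `(q;q)_A / ((q;q)_B (q;q)_{A-B})` for `B ≤ A`, and `0` otherwise. -/
noncomputable def qBinom (A B : ℕ) : FractionRing (Polynomial ℤ) :=
  if B ≤ A then
    algebraMap (Polynomial ℤ) (FractionRing (Polynomial ℤ)) (qPoch A) /
      (algebraMap (Polynomial ℤ) (FractionRing (Polynomial ℤ)) (qPoch B) *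
        algebraMap (Polynomial ℤ) (FractionRing (Polynomial ℤ)) (qPoch (A - B)))
  else 0

/-- The exponent `E(n,m,N) = n + (m+n)(n+1) + binom(N−n−m+1,2) + (N−n−m)·n`. -/
def Eexp (n m N : ℕ) : ℕ :=
  n + (m + n) * (n + 1) + (N - n - m + 1).choose 2 + (N - n - m) * n

open Finset

local notation "K" => FractionRing ℤ[X]
local notation "q" => algebraMap ℤ[X] K X

lemma Nat.choose_two_succ (n : ℕ) : (n + 1).choose 2 = n.choose 2 + n := by
  rw [Nat.choose_succ_succ', Nat.choose_one_right, add_comm]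

lemma one_sub_X_pow_ne_zero {j : ℕ} (hj : j ≠ 0) : (1 - X ^ j : ℤ[X]) ≠ 0 := by
  intro h
  simpa [coeff_one, hj] using congrArg (coeff · j) h

lemma algebraMap_qPoch_ne_zero (n : ℕ) : algebraMap ℤ[X] K (qPoch n) ≠ 0 :=
  (map_ne_zero_iff _ (IsFractionRing.injective ℤ[X] K)).2 <|
    prod_ne_zero_iff.2 fun j _ => one_sub_X_pow_ne_zero j.succ_ne_zero

lemma one_sub_q_pow_ne_zero {j : ℕ} (hj : j ≠ 0) : (1 - q ^ j : K) ≠ 0 := by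
  simpa using (map_ne_zero_iff _ (IsFractionRing.injective ℤ[X] K)).2 (one_sub_X_pow_ne_zero hj)

lemma qPoch_zero : qPoch 0 = 1 := prod_range_zero _

lemma algebraMap_qPoch_succ (n : ℕ) :
    algebraMap ℤ[X] K (qPoch (n + 1)) = algebraMap ℤ[X] K (qPoch n) * (1 - q ^ (n + 1)) := by
  simp [qPoch, prod_range_succ]

lemma qBinom_of_lt {A B : ℕ} (h : A < B) : qBinom A B = 0 :=
  if_neg h.not_ge

lemma qBinom_zero_right (A : ℕ) : qBinom A 0 = 1 := by
  simp [qBinom, qPoch_zero, div_self (algebraMap_qPoch_ne_zero A)]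

lemma qBinom_self (A : ℕ) : qBinom A A = 1 := by
  simp [qBinom, qPoch_zero, div_self (algebraMap_qPoch_ne_zero A)]

lemma qBinom_symm {A B : ℕ} (h : B ≤ A) : qBinom A (A - B) = qBinom A B := by
  rw [qBinom, qBinom, if_pos (A.sub_le B), if_pos h, Nat.sub_sub_self h, mul_comm]

lemma qBinom_succ_succ (M i : ℕ) :
    qBinom (M + 1) (i + 1) = q ^ (i + 1) * qBinom M (i + 1) + qBinom M i := by
  rcases lt_trichotomy i M with h | rfl | h
  · obtain ⟨k, rfl⟩ := Nat.exists_eq_add_of_lt h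
    rw [qBinom, qBinom, qBinom, if_pos (by omega), if_pos (by omega), if_pos (by omega),
      show i + k + 1 + 1 - (i + 1) = k + 1 by omega, show i + k + 1 - (i + 1) = k by omega,
      show i + k + 1 - i = k + 1 by omega]
    simp only [algebraMap_qPoch_succ]
    have := algebraMap_qPoch_ne_zero i
    have := algebraMap_qPoch_ne_zero k
    have := one_sub_q_pow_ne_zero i.succ_ne_zero
    have := one_sub_q_pow_ne_zero k.succ_ne_zero
    field_simp
    ring
  · rw [qBinom_self, qBinom_of_lt i.lt_succ_self, qBinom_self, mul_zero, zero_add]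
  · rw [qBinom_of_lt (by omega), qBinom_of_lt (by omega), qBinom_of_lt h, mul_zero, add_zero]

theorem sum_qBinom_mul_eq_prod_sub (M : ℕ) (z w : K) :
    ∑ j ∈ range (M + 1), (-1) ^ j * q ^ j.choose 2 * z ^ j * w ^ (M - j) * qBinom M j =
      ∏ t ∈ range M, (w - z * q ^ t) := by
  induction M generalizing z with
  | zero => simp [qBinom_self]
  | succ M ih =>
    have shifted : ∏ t ∈ range (M + 1), (w - z * q ^ t) =
        (∏ t ∈ range M, (w - z * q * q ^ t)) * (w - z) := by
      simp [prod_range_succ', pow_succ, mul_assoc, mul_comm]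
    rw [shifted, ← ih, sum_range_succ']
    simp only [qBinom_succ_succ, mul_add, sum_add_distrib]
    -- q-Pascal splits the sum into `w` times and `-z` times the sum at `z * q`.
    set S := ∑ j ∈ range (M + 1), (-1) ^ j * q ^ j.choose 2 * (z * q) ^ j * w ^ (M - j) * qBinom M j
    have upper : w * S = ∑ i ∈ range (M + 1), (-1) ^ (i + 1) * q ^ (i + 1).choose 2 *
          z ^ (i + 1) * w ^ (M + 1 - (i + 1)) * (q ^ (i + 1) * qBinom M (i + 1)) +
        (-1) ^ 0 * q ^ Nat.choose 0 2 * z ^ 0 * w ^ (M + 1 - 0) * qBinom (M + 1) 0 := by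
      have : w * S = ∑ j ∈ range (M + 2),
          (-1) ^ j * q ^ j.choose 2 * (z * q) ^ j * w ^ (M + 1 - j) * qBinom M j := by
        rw [sum_range_succ, qBinom_of_lt M.lt_succ_self, mul_zero, add_zero, mul_sum]
        refine sum_congr rfl fun j hj => ?_
        rw [Nat.sub_add_comm (mem_range_succ_iff.1 hj), pow_succ]
        ring
      rw [this, sum_range_succ', qBinom_zero_right, qBinom_zero_right]
      congr 1
      exact sum_congr rfl fun i _ => by ring
    have lower : ∑ i ∈ range (M + 1), (-1) ^ (i + 1) * q ^ (i + 1).choose 2 * z ^ (i + 1) *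
        w ^ (M + 1 - (i + 1)) * qBinom M i = -z * S := by
      rw [mul_sum]
      refine sum_congr rfl fun i _ => ?_
      rw [Nat.add_sub_add_right, Nat.choose_two_succ]
      ring
    rw [lower]
    linear_combination -upper

theorem sum_range_alternating_qBinom (M m : ℕ) :
    ∑ j ∈ range (m + 1), (-1) ^ j * q ^ j.choose 2 * qBinom (M + 1) j =
      (-1) ^ m * q ^ (m + 1).choose 2 * qBinom M m := by
  induction m with
  | zero => simp [qBinom_zero_right]
  | succ m ih =>
    rw [sum_range_succ, ih, qBinom_succ_succ, Nat.choose_two_succ (m + 1), Nat.choose_two_succ m]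
    ring

lemma Eexp_add_add (n m k : ℕ) :
    Eexp n m (n + m + k) = n * (n + m + k + 1) + (n + m + k) + k.choose 2 := by
  rw [Eexp, show n + m + k - n - m = k by omega, Nat.choose_two_succ]
  ring

lemma sum_range_Eexp_eq (n N : ℕ) (hn : n ≤ N) :
    ∑ m ∈ range (N - n + 1), (-1) ^ (N - n - m) * q ^ Eexp n m N * qBinom N (n + m) =
      q ^ (n * (N + 1) + N) * ∑ k ∈ range (N - n + 1), (-1) ^ k * q ^ k.choose 2 * qBinom N k := by
  rw [mul_sum, ← sum_range_reflect]
  refine sum_congr rfl fun k hk => ?_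
  obtain ⟨m, rfl⟩ : ∃ m, N = n + m + k := ⟨N - n - k, by have := mem_range.1 hk; omega⟩
  rw [show n + m + k - n + 1 - 1 - k = m by omega, show n + m + k - n - m = k by omega,
    Eexp_add_add, ← qBinom_symm (by omega : k ≤ n + m + k), show n + m + k - k = n + m by omega,
    pow_add]
  ring

lemma sum_Icc_one_eq_sum_range_sub {β : Type*} [AddCommMonoid β] (f : ℕ → β) (N : ℕ) :
    ∑ n ∈ Icc 1 N, f n = ∑ j ∈ range N, f (N - j) := by
  rw [range_eq_Ico, sum_Ico_reflect _ _ N.le_succ, Nat.add_sub_cancel_left, Nat.sub_zero,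
    Ico_add_one_right_eq_Icc]

lemma prod_range_pow_sub_pow {R : Type*} [CommRing R] (x : R) (M : ℕ) :
    ∏ t ∈ range M, (x ^ (M + 1) - x ^ t) =
      (-1) ^ M * x ^ M.choose 2 * ∏ j ∈ Icc 2 (M + 1), (1 - x ^ j) := by
  have factor : ∀ t ∈ range M, x ^ (M + 1) - x ^ t = -1 * x ^ t * (1 - x ^ (M - 1 - t + 2)) := by
    intro t ht
    have := mem_range.1 ht
    rw [show M - 1 - t + 2 = M + 1 - t by omega, mul_sub, mul_one, mul_assoc, ← pow_add,
      Nat.add_sub_cancel' (by omega)]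
    ring
  rw [prod_congr rfl factor, prod_mul_distrib, prod_mul_distrib, prod_const, card_range,
    prod_pow_eq_pow_sum, sum_range_id, ← Nat.choose_two_right,
    prod_range_reflect (fun t => 1 - x ^ (t + 2)), ← Ico_add_one_right_eq_Icc,
    prod_Ico_eq_prod_range, show M + 1 + 1 - 2 = M by omega]
  simp only [add_comm 2]

/-- `∑_{n=1}^{N} ∑_{m=0}^{N−n} (−1)^{N−n−m} q^{E(n,m,N)} [N choose n+m]_q
      = (−1)^{N+1} q^{binom(N+2,2)} ∏_{j=2}^{N} (1 − q^j)`. -/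
theorem double_sum_identity (N : ℕ) (hN : 1 ≤ N) :
    ∑ n ∈ Finset.Icc 1 N, ∑ m ∈ Finset.range (N - n + 1),
      (-1 : FractionRing (Polynomial ℤ)) ^ (N - n - m) *
        algebraMap (Polynomial ℤ) (FractionRing (Polynomial ℤ)) (X ^ Eexp n m N) *
        qBinom N (n + m) =
    (-1 : FractionRing (Polynomial ℤ)) ^ (N + 1) *
      algebraMap (Polynomial ℤ) (FractionRing (Polynomial ℤ))
        (X ^ ((N + 2).choose 2) * ∏ j ∈ Finset.Icc 2 N, (1 - X ^ j)) := by
  obtain ⟨M, rfl⟩ := Nat.exists_eq_add_of_le' hN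
  simp only [map_mul, map_pow, map_prod, map_sub, map_one]
  calc _ = ∑ n ∈ Icc 1 (M + 1), q ^ (n * (M + 2) + (M + 1)) *
          ((-1) ^ (M + 1 - n) * q ^ (M + 1 - n + 1).choose 2 * qBinom M (M + 1 - n)) :=
        sum_congr rfl fun n hn => by
          rw [sum_range_Eexp_eq n _ (mem_Icc.1 hn).2, sum_range_alternating_qBinom]
    _ = q ^ (3 * (M + 1)) * ∑ j ∈ range (M + 1),
          (-1) ^ j * q ^ j.choose 2 * 1 ^ j * (q ^ (M + 1)) ^ (M - j) * qBinom M j := by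
        rw [sum_Icc_one_eq_sum_range_sub, mul_sum]
        refine sum_congr rfl fun j hj => ?_
        obtain ⟨i, rfl⟩ : ∃ i, M = j + i := ⟨M - j, by have := mem_range.1 hj; omega⟩
        rw [show j + i + 1 - j = i + 1 by omega, show j + i + 1 - (i + 1) = j by omega,
          Nat.add_sub_cancel_left, Nat.choose_two_succ]
        ring
    _ = _ := by
        simp only [sum_qBinom_mul_eq_prod_sub, one_mul, prod_range_pow_sub_pow]
        rw [show M + 1 + 2 = M + 1 + 1 + 1 from rfl, Nat.choose_two_succ, Nat.choose_two_succ,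
          Nat.choose_two_succ]
        ring
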